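/- Conditional next-draw probability (Equation (9) of the proof of Proposition 3.1): let u ≠ v be elements of α, let K ≤ m, let j < K, and let t : Fin j → α be an injective sequence none of whose entries is u or v. Then, under the Plackett–Luce distribution W on injective sequences s : Fin K → α, the conditional probability that s(j) = u, given that the first j entries of s equal t and that s(j) ∈ {u, v}, equals p(u) / (p(u) + p(v)); that is, (∑_{s : s extends t and s(j) = u} W(s)) / (∑_{s : s extends t and s(j) ∈ {u,v}} W(s)) = p(u) / (p(u) + p(v)). -/

import Mathlib

open Finset

open scoped Classical

/-- The Plackett–Luce weight of a sequence `s : Fin K → α` of draws without replacement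
from the categorical distribution `p`:
`W(s) = ∏_{j=0}^{K-1} p(s j) / (1 - ∑_{l<j} p(s l))`. -/
noncomputable def plWeight {α : Type*} [Fintype α] (p : α → ℝ) {K : ℕ} (s : Fin K → α) : ℝ :=
  ∏ j : Fin K, p (s j) / (1 - ∑ l ∈ univ.filter (fun l => l < j), p (s l))

section Aux

variable {α : Type*} [Fintype α]

lemma plWeight_eq_Iio (p : α → ℝ) {K : ℕ} (s : Fin K → α) :
    plWeight p s = ∏ j : Fin K, p (s j) / (1 - ∑ l ∈ Finset.Iio j, p (s l)) := by
  unfold plWeight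
  refine Finset.prod_congr rfl fun j _ => ?_
  rw [show univ.filter (fun l => l < j) = Finset.Iio j from by ext l; simp]

lemma plWeight_snoc (p : α → ℝ) {r : ℕ} (q : Fin r → α) (a : α) :
    plWeight p (Fin.snoc q a) = plWeight p q * (p a / (1 - ∑ l, p (q l))) := by
  rw [plWeight_eq_Iio, plWeight_eq_Iio, Fin.prod_univ_castSucc]
  congr 1
  · refine Finset.prod_congr rfl fun i _ => ?_
    rw [Fin.snoc_castSucc, Fin.Iio_castSucc, Finset.sum_map]
    have : ∀ l ∈ Finset.Iio i, p ((Fin.snoc q a : Fin (r+1) → α) (Fin.castSuccEmb l)) = p (q l) := by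
      intro l _
      rw [show Fin.castSuccEmb l = l.castSucc from rfl, Fin.snoc_castSucc]
    rw [Finset.sum_congr rfl this]
  · rw [Fin.snoc_last, Fin.Iio_last_eq_map, Finset.sum_map]
    have : ∀ l ∈ (univ : Finset (Fin r)), p ((Fin.snoc q a : Fin (r+1) → α) (Fin.castSuccEmb l)) = p (q l) := by
      intro l _
      rw [show Fin.castSuccEmb l = l.castSucc from rfl, Fin.snoc_castSucc]
    rw [Finset.sum_congr rfl this]

lemma sum_p_lt_one (p : α → ℝ) (hp : ∀ a, 0 < p a) (hsum : ∑ a, p a = 1)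
    {s : Finset α} (hs : s.card < Fintype.card α) : ∑ x ∈ s, p x < 1 := by
  have hne : s ≠ univ := by
    intro h; rw [h, Finset.card_univ] at hs; exact lt_irrefl _ hs
  obtain ⟨i, _, hi⟩ := Finset.exists_of_ssubset (Finset.ssubset_univ_iff.mpr hne)
  rw [← hsum]
  exact Finset.sum_lt_sum_of_subset (Finset.subset_univ s) (Finset.mem_univ i) hi (hp i)
    (fun j _ _ => (hp j).le)

lemma partial_sum_lt_one (p : α → ℝ) (hp : ∀ a, 0 < p a) (hsum : ∑ a, p a = 1)
    {r : ℕ} (hr : r ≤ Fintype.card α) (q : Fin r → α) (hq : Function.Injective q)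
    (T : Finset (Fin r)) (hT : T.card < r) : ∑ l ∈ T, p (q l) < 1 := by
  rw [← Finset.sum_image (g := q) (f := p) (fun x _ y _ h => hq h)]
  apply sum_p_lt_one p hp hsum
  calc (T.image q).card ≤ T.card := Finset.card_image_le
    _ < r := hT
    _ ≤ Fintype.card α := hr

lemma full_sum_lt_one (p : α → ℝ) (hp : ∀ a, 0 < p a) (hsum : ∑ a, p a = 1)
    {r : ℕ} (hr : r < Fintype.card α) (q : Fin r → α) (hq : Function.Injective q) :
    ∑ l, p (q l) < 1 := by
  rw [← Finset.sum_image (g := q) (f := p) (fun x _ y _ h => hq h)]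
  apply sum_p_lt_one p hp hsum
  calc ((univ : Finset (Fin r)).image q).card ≤ (univ : Finset (Fin r)).card :=
        Finset.card_image_le
    _ = r := by simp
    _ < Fintype.card α := hr

lemma plWeight_pos (p : α → ℝ) (hp : ∀ a, 0 < p a) (hsum : ∑ a, p a = 1)
    {r : ℕ} (hr : r ≤ Fintype.card α) (q : Fin r → α) (hq : Function.Injective q) :
    0 < plWeight p q := by
  rw [plWeight_eq_Iio]
  refine Finset.prod_pos fun j _ => ?_
  refine div_pos (hp _) (sub_pos.mpr ?_)
  refine partial_sum_lt_one p hp hsum hr q hq _ ?_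
  rw [Fin.card_Iio]
  exact j.isLt

lemma snoc_injective {r : ℕ} (q : Fin r → α) (hq : Function.Injective q) (a : α)
    (ha : ∀ i, q i ≠ a) : Function.Injective (Fin.snoc q a : Fin (r + 1) → α) := by
  intro x y
  refine Fin.lastCases (motive := fun z =>
    (Fin.snoc q a : Fin (r+1) → α) z = (Fin.snoc q a : Fin (r+1) → α) y → z = y) ?_ ?_ x
  · refine Fin.lastCases (motive := fun w =>
      (Fin.snoc q a : Fin (r+1) → α) (Fin.last r) = (Fin.snoc q a : Fin (r+1) → α) w →
        Fin.last r = w) ?_ ?_ y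
    · intro _; rfl
    · intro y' h
      exfalso
      rw [Fin.snoc_last, Fin.snoc_castSucc] at h
      exact ha y' h.symm
  · intro x'
    refine Fin.lastCases (motive := fun w =>
      (Fin.snoc q a : Fin (r+1) → α) x'.castSucc = (Fin.snoc q a : Fin (r+1) → α) w →
        x'.castSucc = w) ?_ ?_ y
    · intro h
      exfalso
      rw [Fin.snoc_last, Fin.snoc_castSucc] at h
      exact ha x' h
    · intro y' h
      rw [Fin.snoc_castSucc, Fin.snoc_castSucc] at h
      exact congrArg Fin.castSucc (hq h)

lemma ext_succ_iff {K r : ℕ} (hr1 : r + 1 ≤ K) (hrK : r < K) (q : Fin r → α) (a : α)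
    (s : Fin K → α) :
    ((∀ i : Fin r, s (Fin.castLE (by omega) i) = q i) ∧ s ⟨r, hrK⟩ = a) ↔
      ∀ i : Fin (r + 1), s (Fin.castLE hr1 i) = (Fin.snoc q a : Fin (r + 1) → α) i := by
  constructor
  · rintro ⟨h1, h2⟩ i
    refine Fin.lastCases ?_ ?_ i
    · rw [Fin.snoc_last, show Fin.castLE hr1 (Fin.last r) = ⟨r, hrK⟩ from Fin.ext rfl]
      exact h2
    · intro i'
      rw [Fin.snoc_castSucc,
        show Fin.castLE hr1 i'.castSucc = Fin.castLE (by omega) i' from Fin.ext rfl]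
      exact h1 i'
  · intro h
    constructor
    · intro i
      have := h (Fin.castSucc i)
      rw [Fin.snoc_castSucc,
        show Fin.castLE hr1 i.castSucc = Fin.castLE (by omega) i from Fin.ext rfl] at this
      exact this
    · have := h (Fin.last r)
      rw [Fin.snoc_last, show Fin.castLE hr1 (Fin.last r) = ⟨r, hrK⟩ from Fin.ext rfl] at this
      exact this

lemma plWeight_sum_ext (p : α → ℝ) (hp : ∀ a, 0 < p a) (hsum : ∑ a, p a = 1) :
    ∀ (n : ℕ) {K r : ℕ}, r + n = K → K ≤ Fintype.card α → ∀ (hr : r ≤ K)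
      (q : Fin r → α), Function.Injective q →
    ∑ s ∈ univ.filter (fun s : Fin K → α =>
        Function.Injective s ∧ ∀ i : Fin r, s (Fin.castLE hr i) = q i), plWeight p s
      = plWeight p q := by
  intro n
  induction n with
  | zero =>
    intro K r hrn hK hr q hq
    obtain rfl : r = K := by omega
    have hset : univ.filter (fun s : Fin r → α =>
        Function.Injective s ∧ ∀ i : Fin r, s (Fin.castLE hr i) = q i) = {q} := by
      ext s
      simp only [Finset.mem_filter, Finset.mem_univ, true_and, Finset.mem_singleton]
      constructor
      · rintro ⟨-, h⟩
        funext i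
        have := h i
        rwa [show Fin.castLE hr i = i from Fin.ext rfl] at this
      · rintro rfl
        exact ⟨hq, fun i => congrArg _ (Fin.ext rfl)⟩
    rw [hset, Finset.sum_singleton]
  | succ n ih =>
    intro K r hrn hK hr q hq
    have hrK : r < K := by omega
    have hr1 : r + 1 ≤ K := hrK
    rw [← Finset.sum_fiberwise_of_maps_to
      (g := fun s : Fin K → α => s ⟨r, hrK⟩) (t := univ) (fun s _ => Finset.mem_univ _)]
    have hinner : ∀ a : α, (∑ s ∈ (univ.filter (fun s : Fin K → α =>
        Function.Injective s ∧ ∀ i : Fin r, s (Fin.castLE hr i) = q i)).filter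
          (fun s => s ⟨r, hrK⟩ = a), plWeight p s)
        = if a ∈ (univ : Finset (Fin r)).image q then 0 else plWeight p (Fin.snoc q a) := by
      intro a
      split_ifs with hmem
      · refine Finset.sum_eq_zero fun s hs => ?_
        simp only [Finset.mem_filter, Finset.mem_univ, true_and] at hs
        obtain ⟨⟨hsinj, hpre⟩, hsa⟩ := hs
        obtain ⟨i, -, hi⟩ := Finset.mem_image.mp hmem
        exfalso
        have h1 : s (Fin.castLE hr i) = s ⟨r, hrK⟩ := by rw [hpre i, hsa, hi]
        have h2 := hsinj h1
        have h3 : (i : ℕ) = r := congrArg Fin.val h2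
        omega
      · have ha : ∀ i, q i ≠ a := fun i hi =>
          hmem (Finset.mem_image.mpr ⟨i, Finset.mem_univ i, hi⟩)
        rw [Finset.filter_filter]
        have hcong : ∀ s ∈ (univ : Finset (Fin K → α)),
            ((Function.Injective s ∧ ∀ i : Fin r, s (Fin.castLE hr i) = q i) ∧
              s ⟨r, hrK⟩ = a)
            ↔ (Function.Injective s ∧
                ∀ i : Fin (r + 1), s (Fin.castLE hr1 i) = (Fin.snoc q a : Fin (r+1) → α) i) := by
          intro s _
          rw [and_assoc]
          exact and_congr_right fun _ => ext_succ_iff hr1 hrK q a s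
        rw [Finset.filter_congr hcong]
        exact ih (by omega) hK hr1 (Fin.snoc q a) (snoc_injective q hq a ha)
    rw [Finset.sum_congr rfl (fun a _ => hinner a)]
    have h1 : ∀ a : α, (if a ∈ (univ : Finset (Fin r)).image q then 0
        else plWeight p (Fin.snoc q a))
        = if a ∈ univ \ (univ : Finset (Fin r)).image q then plWeight p (Fin.snoc q a)
          else 0 := by
      intro a
      by_cases h : a ∈ (univ : Finset (Fin r)).image q <;> simp [h]
    rw [Finset.sum_congr rfl (fun a _ => h1 a), Finset.sum_ite_mem, Finset.univ_inter]
    have hS : ∑ x ∈ (univ : Finset (Fin r)).image q, p x = ∑ l, p (q l) :=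
      Finset.sum_image (fun x _ y _ h => hq h)
    have hlt : ∑ l, p (q l) < 1 := full_sum_lt_one p hp hsum (lt_of_lt_of_le hrK hK) q hq
    calc ∑ a ∈ univ \ (univ : Finset (Fin r)).image q, plWeight p (Fin.snoc q a)
        = ∑ a ∈ univ \ (univ : Finset (Fin r)).image q,
            plWeight p q * (p a / (1 - ∑ l, p (q l))) :=
          Finset.sum_congr rfl fun a _ => plWeight_snoc p q a
      _ = plWeight p q *
            ((∑ a ∈ univ \ (univ : Finset (Fin r)).image q, p a) / (1 - ∑ l, p (q l))) := by
          rw [← Finset.mul_sum, Finset.sum_div]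
      _ = plWeight p q := by
          rw [Finset.sum_sdiff_eq_sub (Finset.subset_univ _), hsum, hS,
            div_self (by linarith), mul_one]

end Aux

/-- Conditional next-draw probability (Equation (9) of the proof of Proposition 3.1):
for `u ≠ v`, `K ≤ m`, `j < K`, and an injective prefix `t : Fin j → α` avoiding `u` and `v`,
the conditional probability under the Plackett–Luce distribution that `s j = u`, given that
the first `j` entries of `s` equal `t` and `s j ∈ {u, v}`, equals `p u / (p u + p v)`. -/
theorem plackettLuce_conditional_next_draw {α : Type*} [Fintype α] (p : α → ℝ)
    (hp : ∀ a, 0 < p a) (hsum : ∑ a, p a = 1)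
    (u v : α) (huv : u ≠ v)
    (K : ℕ) (hK : K ≤ Fintype.card α)
    (j : ℕ) (hj : j < K) (t : Fin j → α) (ht : Function.Injective t)
    (htu : ∀ i, t i ≠ u) (htv : ∀ i, t i ≠ v) :
    (∑ s ∈ (univ : Finset (Fin K → α)).filter
        (fun s => Function.Injective s ∧ (∀ i : Fin j, s (Fin.castLE hj.le i) = t i) ∧
          s ⟨j, hj⟩ = u),
      plWeight p s)
    / (∑ s ∈ (univ : Finset (Fin K → α)).filter
        (fun s => Function.Injective s ∧ (∀ i : Fin j, s (Fin.castLE hj.le i) = t i) ∧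
          (s ⟨j, hj⟩ = u ∨ s ⟨j, hj⟩ = v)),
      plWeight p s)
    = p u / (p u + p v) := by
  have hj1 : j + 1 ≤ K := hj
  have hext : ∀ a : α,
      (∑ s ∈ (univ : Finset (Fin K → α)).filter
        (fun s => Function.Injective s ∧ (∀ i : Fin j, s (Fin.castLE hj.le i) = t i) ∧
          s ⟨j, hj⟩ = a),
        plWeight p s)
      = if (∀ i, t i ≠ a) then plWeight p (Fin.snoc t a) else 0 := by
    intro a
    split_ifs with ha
    · have hcong : ∀ s ∈ (univ : Finset (Fin K → α)),
          (Function.Injective s ∧ (∀ i : Fin j, s (Fin.castLE hj.le i) = t i) ∧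
            s ⟨j, hj⟩ = a)
          ↔ (Function.Injective s ∧
              ∀ i : Fin (j + 1), s (Fin.castLE hj1 i) = (Fin.snoc t a : Fin (j+1) → α) i) :=
        fun s _ => and_congr_right fun _ => ext_succ_iff hj1 hj t a s
      rw [Finset.filter_congr hcong]
      exact plWeight_sum_ext p hp hsum (K - (j + 1)) (by omega) hK hj1 (Fin.snoc t a)
        (snoc_injective t ht a ha)
    · push_neg at ha
      obtain ⟨i0, hi0⟩ := ha
      refine Finset.sum_eq_zero fun s hs => ?_
      simp only [Finset.mem_filter, Finset.mem_univ, true_and] at hs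
      obtain ⟨hsinj, hpre, hsa⟩ := hs
      exfalso
      have h1 : s (Fin.castLE hj.le i0) = s ⟨j, hj⟩ := by rw [hpre i0, hsa, hi0]
      have h2 : (i0 : ℕ) = j := congrArg Fin.val (hsinj h1)
      omega
  have hnum := hext u
  rw [if_pos htu] at hnum
  have hden : (∑ s ∈ (univ : Finset (Fin K → α)).filter
        (fun s => Function.Injective s ∧ (∀ i : Fin j, s (Fin.castLE hj.le i) = t i) ∧
          (s ⟨j, hj⟩ = u ∨ s ⟨j, hj⟩ = v)),
        plWeight p s)
      = plWeight p (Fin.snoc t u) + plWeight p (Fin.snoc t v) := by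
    have hcong : ∀ s ∈ (univ : Finset (Fin K → α)),
        (Function.Injective s ∧ (∀ i : Fin j, s (Fin.castLE hj.le i) = t i) ∧
          (s ⟨j, hj⟩ = u ∨ s ⟨j, hj⟩ = v))
        ↔ ((Function.Injective s ∧ (∀ i : Fin j, s (Fin.castLE hj.le i) = t i) ∧
              s ⟨j, hj⟩ = u) ∨
            (Function.Injective s ∧ (∀ i : Fin j, s (Fin.castLE hj.le i) = t i) ∧
              s ⟨j, hj⟩ = v)) := by
      intro s _
      tauto
    rw [Finset.filter_congr hcong, Finset.filter_or, Finset.sum_union ?hd]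
    case hd =>
      refine Finset.disjoint_left.mpr fun s hs1 hs2 => ?_
      simp only [Finset.mem_filter] at hs1 hs2
      exact huv (hs1.2.2.2 ▸ hs2.2.2.2 ▸ rfl)
    rw [hext u, hext v, if_pos htu, if_pos htv]
  rw [hnum, hden, plWeight_snoc, plWeight_snoc]
  have hP : 0 < plWeight p t := plWeight_pos p hp hsum (le_trans hj.le hK) t ht
  have hS : ∑ l, p (t l) < 1 := full_sum_lt_one p hp hsum (lt_of_lt_of_le hj hK) t ht
  have h1S : (0:ℝ) < 1 - ∑ l, p (t l) := sub_pos.mpr hS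
  have huvpos : (0:ℝ) < p u + p v := add_pos (hp u) (hp v)
  have hdpos : 0 < plWeight p t * (p u / (1 - ∑ l, p (t l))) +
      plWeight p t * (p v / (1 - ∑ l, p (t l))) :=
    add_pos (mul_pos hP (div_pos (hp u) h1S)) (mul_pos hP (div_pos (hp v) h1S))
  rw [div_eq_div_iff hdpos.ne' huvpos.ne']
  field_simp
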